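/- Let λ_1 ≥ λ_2 ≥ … ≥ λ_N ≥ 0 be the eigenvalues of a symmetric PSD matrix S, and let r > 0, c ≥ 0, v ∈ R^N. Then Σ_{j=1}^N λ_j(S + c vvᵀ) / (r + λ_j(S + c vvᵀ))² ≤ 1/(4r) + 2·Σ_{j=1}^N λ_j(S) / (r + λ_j(S))². -/

import Mathlib

/-!
Diagonalising shows `∑ λ / (r + λ)² = tr R - r tr R²` with `R = (r • 1 + S)⁻¹`, and by
Sherman–Morrison the rank-one update replaces `R` by `R - k wwᵀ`, where `w = R v` and
`k = c / (1 + c vᵀw) ≥ 0`. Writing `p = wᵀw`, the sum therefore changes by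
`-k p + 2 r k wᵀRw - r (k p)²`. Since `r R ≤ 1` we have `r wᵀRw ≤ p`, so the change is at most
`k p - r (k p)² ≤ 1 / (4 r)`.
-/

open Matrix Unitary

theorem sub_mul_sq_le_one_div_four_mul {r : ℝ} (hr : 0 < r) (t : ℝ) :
    t - r * t ^ 2 ≤ 1 / (4 * r) := by
  rw [le_div_iff₀ (by positivity)]
  nlinarith [sq_nonneg (2 * r * t - 1)]

namespace Matrix

variable {n : Type*} [Fintype n] [DecidableEq n]

theorem trace_conjStarAlgAut {𝕜 : Type*} [RCLike 𝕜] (u : unitary (Matrix n n 𝕜))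
    (M : Matrix n n 𝕜) : (conjStarAlgAut 𝕜 _ u M).trace = M.trace := by
  rw [conjStarAlgAut_apply, trace_mul_cycle, Unitary.coe_star_mul_self, one_mul]

namespace IsHermitian

variable {A : Matrix n n ℝ} (hA : A.IsHermitian) (r : ℝ)

theorem smul_one_add_eq_conjStarAlgAut :
    r • 1 + A = conjStarAlgAut ℝ _ hA.eigenvectorUnitary
      (diagonal fun i ↦ r + hA.eigenvalues i) := by
  conv_lhs => rw [hA.spectral_theorem, ← map_one (conjStarAlgAut ℝ _ hA.eigenvectorUnitary),
    ← map_smul, ← map_add]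
  rw [← diagonal_one, ← diagonal_smul, diagonal_add]
  congr 2
  ext i
  simp

theorem inv_smul_one_add_eq_conjStarAlgAut (h : ∀ i, r + hA.eigenvalues i ≠ 0) :
    (r • 1 + A)⁻¹ = conjStarAlgAut ℝ _ hA.eigenvectorUnitary
      (diagonal fun i ↦ (r + hA.eigenvalues i)⁻¹) := by
  refine inv_eq_left_inv ?_
  rw [hA.smul_one_add_eq_conjStarAlgAut, ← map_mul, diagonal_mul_diagonal]
  simp [inv_mul_cancel₀ (h _)]

theorem sum_eigenvalues_div_sq (h : ∀ i, r + hA.eigenvalues i ≠ 0) :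
    ∑ i, hA.eigenvalues i / (r + hA.eigenvalues i) ^ 2 =
      (r • 1 + A)⁻¹.trace - r * ((r • 1 + A)⁻¹ * (r • 1 + A)⁻¹).trace := by
  rw [hA.inv_smul_one_add_eq_conjStarAlgAut r h, ← map_mul, trace_conjStarAlgAut,
    trace_conjStarAlgAut, diagonal_mul_diagonal, trace_diagonal, trace_diagonal, Finset.mul_sum,
    ← Finset.sum_sub_distrib]
  refine Finset.sum_congr rfl fun i _ ↦ ?_
  field_simp [h i]
  ring

end IsHermitian

theorem PosSemidef.mul_dotProduct_inv_smul_one_add_mulVec_le {S : Matrix n n ℝ}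
    (hS : S.PosSemidef) {r : ℝ} (hr : 0 < r) (w : n → ℝ) :
    r * (w ⬝ᵥ ((r • 1 + S)⁻¹ *ᵥ w)) ≤ w ⬝ᵥ w := by
  set u := (r • 1 + S)⁻¹ *ᵥ w
  have hB : IsUnit (r • 1 + S) := ((PosDef.smul PosDef.one hr).add_posSemidef hS).isUnit
  have hw : w = r • u + S *ᵥ u := by
    have : w = (r • 1 + S) *ᵥ u := by
      rw [mulVec_mulVec, mul_nonsing_inv _ ((isUnit_iff_isUnit_det _).mp hB), one_mulVec]
    rwa [add_mulVec, smul_mulVec, one_mulVec] at this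
  have hu : 0 ≤ u ⬝ᵥ (S *ᵥ u) := by simpa using hS.dotProduct_mulVec_nonneg u
  have hSu : 0 ≤ (S *ᵥ u) ⬝ᵥ (S *ᵥ u) := by simpa using dotProduct_star_self_nonneg (S *ᵥ u)
  have key : w ⬝ᵥ w - r * (w ⬝ᵥ u) = r * (u ⬝ᵥ (S *ᵥ u)) + (S *ᵥ u) ⬝ᵥ (S *ᵥ u) := by
    rw [hw]
    simp only [add_dotProduct, dotProduct_add, smul_dotProduct, dotProduct_smul, smul_eq_mul]
    ring
  linarith [mul_nonneg hr.le hu]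

theorem inv_add_smul_vecMulVec {α : Type*} [Field α] {B : Matrix n n α} (hB : IsUnit B)
    (c : α) (u v : n → α) (h : 1 + c * (v ⬝ᵥ (B⁻¹ *ᵥ u)) ≠ 0) :
    (B + c • vecMulVec u v)⁻¹ =
      B⁻¹ - (c / (1 + c * (v ⬝ᵥ (B⁻¹ *ᵥ u)))) • vecMulVec (B⁻¹ *ᵥ u) (v ᵥ* B⁻¹) := by
  apply inv_eq_right_inv
  have hBB : B * B⁻¹ = 1 := mul_nonsing_inv B ((isUnit_iff_isUnit_det B).mp hB)
  set k := c / (1 + c * (v ⬝ᵥ (B⁻¹ *ᵥ u)))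
  have hk : k * (1 + c * (v ⬝ᵥ (B⁻¹ *ᵥ u))) = c := div_mul_cancel₀ c h
  rw [add_mul, mul_sub, mul_sub, hBB, Matrix.mul_smul, mul_vecMulVec, mulVec_mulVec, hBB,
    one_mulVec, Matrix.smul_mul, Matrix.smul_mul, Matrix.mul_smul, vecMulVec_mul,
    vecMulVec_mul_vecMulVec, vecMulVec_smul, smul_smul, smul_smul]
  calc _ = 1 + (c - k * (1 + c * (v ⬝ᵥ (B⁻¹ *ᵥ u)))) • vecMulVec u (v ᵥ* B⁻¹) := by module
    _ = 1 := by rw [hk, sub_self, zero_smul, add_zero]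

omit [DecidableEq n] in
theorem trace_mul_self_sub_smul_vecMulVec {α : Type*} [CommRing α] (R : Matrix n n α) (k : α)
    (w : n → α) :
    ((R - k • vecMulVec w w) * (R - k • vecMulVec w w)).trace =
      (R * R).trace - 2 * k * (w ⬝ᵥ (R *ᵥ w)) + k ^ 2 * (w ⬝ᵥ w) ^ 2 := by
  simp only [sub_mul, mul_sub, Matrix.mul_smul, Matrix.smul_mul, trace_sub, trace_smul]
  rw [trace_mul_comm (vecMulVec w w) R, mul_vecMulVec, vecMulVec_mul_vecMulVec, trace_vecMulVec,
    trace_vecMulVec, dotProduct_smul, dotProduct_comm]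
  simp only [smul_eq_mul]; ring

theorem PosSemidef.sum_eigenvalues_div_sq_add_smul_vecMulVec_le {S : Matrix n n ℝ}
    (hS : S.PosSemidef) (v : n → ℝ) {r c : ℝ} (hr : 0 < r) (hc : 0 ≤ c)
    (hS' : (S + c • vecMulVec v v).IsHermitian) :
    ∑ j, hS'.eigenvalues j / (r + hS'.eigenvalues j) ^ 2 ≤
      ∑ j, hS.isHermitian.eigenvalues j / (r + hS.isHermitian.eigenvalues j) ^ 2 +
        1 / (4 * r) := by
  have hB : (r • 1 + S).PosDef := (PosDef.one.smul hr).add_posSemidef hS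
  set R := (r • 1 + S)⁻¹
  set w := R *ᵥ v
  have hvR : v ᵥ* R = w := by
    rw [← mulVec_transpose, (isHermitian_iff_isSymm.mp hB.inv.isHermitian).eq]
  have hq : 0 ≤ v ⬝ᵥ w := by simpa using hB.inv.posSemidef.dotProduct_mulVec_nonneg v
  set k := c / (1 + c * (v ⬝ᵥ w))
  have hk : 0 ≤ k := by positivity
  have hinv : (r • 1 + (S + c • vecMulVec v v))⁻¹ = R - k • vecMulVec w w := by
    rw [← add_assoc, inv_add_smul_vecMulVec hB.isUnit c v v (by positivity), hvR]
  have hS'psd : (S + c • vecMulVec v v).PosSemidef :=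
    hS.add ((posSemidef_vecMulVec_self_star v).smul hc)
  have hpos : ∀ i, r + hS.isHermitian.eigenvalues i ≠ 0 := fun i ↦
    (add_pos_of_pos_of_nonneg hr (hS.eigenvalues_nonneg i)).ne'
  have hpos' : ∀ i, r + hS'.eigenvalues i ≠ 0 := fun i ↦
    (add_pos_of_pos_of_nonneg hr (hS'psd.eigenvalues_nonneg i)).ne'
  rw [hS'.sum_eigenvalues_div_sq r hpos', hS.isHermitian.sum_eigenvalues_div_sq r hpos, hinv,
    trace_sub, trace_smul, trace_vecMulVec, trace_mul_self_sub_smul_vecMulVec, smul_eq_mul]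
  have hrs := hS.mul_dotProduct_inv_smul_one_add_mulVec_le hr w
  have hamgm := sub_mul_sq_le_one_div_four_mul hr (k * (w ⬝ᵥ w))
  linear_combination 2 * mul_le_mul_of_nonneg_left hrs hk + hamgm

end Matrix

/-- for PSD `S`, `r > 0`, `c ≥ 0`, `v ∈ ℝ^N`,
`Σ_j λ_j(S + c vvᵀ)/(r + λ_j(S + c vvᵀ))² ≤ 1/(4r) + 2 Σ_j λ_j(S)/(r + λ_j(S))²`. -/
theorem variance_sum_rank_one {N : ℕ} (S : Matrix (Fin N) (Fin N) ℝ)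
    (hS : S.PosSemidef) (v : Fin N → ℝ) (r c : ℝ) (hr : 0 < r) (hc : 0 ≤ c)
    (hS' : (S + c • Matrix.vecMulVec v v).IsHermitian) :
    ∑ j, hS'.eigenvalues j / (r + hS'.eigenvalues j) ^ 2 ≤
      1 / (4 * r) + 2 * ∑ j, hS.isHermitian.eigenvalues j /
        (r + hS.isHermitian.eigenvalues j) ^ 2 := by
  have hS_nonneg :
      0 ≤ ∑ j, hS.isHermitian.eigenvalues j / (r + hS.isHermitian.eigenvalues j) ^ 2 :=
    Finset.sum_nonneg fun j _ ↦ div_nonneg (hS.eigenvalues_nonneg j) (sq_nonneg _)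
  linarith [hS.sum_eigenvalues_div_sq_add_smul_vecMulVec_le v hr hc hS']
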